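/- Let p ∈ ℂ, k ∈ ℕ, and let ω be a cut-off function: ω ∈ C^∞([0,∞), ℝ), 0 ≤ ω ≤ 1, ω ≡ 1 on a neighborhood of 0, and ω(t) = 0 for all sufficiently large t. Define F(z) = ∫_0^∞ t^{z − p − 1} (ln t)^k ω(t) dt for Re z > Re p. Then there exists an entire function g : ℂ → ℂ such that F(z) = (−1)^k k! / (z − p)^{k+1} + g(z) for all z with Re z > Re p. In particular, F extends to a meromorphic function on ℂ whose only pole is at z = p and has order k + 1. -/

import Mathlib

open MeasureTheory Set Complex
open Filter Asymptotics Topology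

noncomputable def auxF (k : ℕ) (t : ℝ) : ℂ :=
  (Real.log t : ℂ) ^ k * Set.indicator (Ioc (0:ℝ) 1) (fun _ => (1:ℂ)) t

lemma auxF_succ (k : ℕ) : (fun t => Real.log t • auxF k t) = auxF (k+1) := by
  funext t
  simp only [auxF, real_smul, pow_succ]
  ring

lemma auxF_locInt (k : ℕ) : LocallyIntegrableOn (auxF k) (Ioi (0:ℝ)) := by
  have hind : Integrable (Set.indicator (Ioc (0:ℝ) 1) (fun _ => (1:ℂ))) := by
    rw [integrable_indicator_iff measurableSet_Ioc]
    exact integrableOn_const measure_Ioc_lt_top.ne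
  have h1 : LocallyIntegrableOn (Set.indicator (Ioc (0:ℝ) 1) (fun _ => (1:ℂ))) (Ioi (0:ℝ)) :=
    (hind.locallyIntegrable).locallyIntegrableOn _
  have hcont : ContinuousOn (fun t : ℝ => (Real.log t : ℂ) ^ k) (Ioi (0:ℝ)) := by
    apply ContinuousOn.pow
    exact Complex.continuous_ofReal.comp_continuousOn
      (Real.continuousOn_log.mono (fun x hx => ne_of_gt hx))
  exact h1.continuousOn_mul hcont isOpen_Ioi.isLocallyClosed

lemma auxF_top (k : ℕ) (a : ℝ) : auxF k =O[atTop] (fun t : ℝ => t ^ (-a)) := by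
  refine (isBigO_zero _ _).congr' ?_ EventuallyEq.rfl
  filter_upwards [eventually_gt_atTop (1:ℝ)] with t ht
  simp [auxF, Set.indicator_of_notMem, not_le.mpr ht, Set.mem_Ioc]

lemma auxF_bot (k : ℕ) {b : ℝ} (hb : 0 < b) :
    auxF k =O[𝓝[>] (0:ℝ)] (fun t : ℝ => t ^ (-b)) := by
  induction k generalizing b with
  | zero =>
    refine (isBigO_iff.mpr ⟨1, ?_⟩)
    filter_upwards [Ioo_mem_nhdsGT_of_mem (by simp : (0:ℝ) ∈ Ico (0:ℝ) 1)] with t ht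
    have h1 : ‖auxF 0 t‖ ≤ 1 := by
      simp only [auxF, pow_zero, one_mul]
      by_cases h : t ∈ Ioc (0:ℝ) 1 <;> simp [Set.indicator_apply, h]
    calc ‖auxF 0 t‖ ≤ 1 := h1
    _ ≤ 1 * ‖t ^ (-b)‖ := by
        rw [one_mul, Real.norm_eq_abs, abs_of_pos (Real.rpow_pos_of_pos ht.1 _)]
        calc (1:ℝ) = t ^ (0:ℝ) := (Real.rpow_zero t).symm
        _ ≤ t ^ (-b) := Real.rpow_le_rpow_of_exponent_ge ht.1 ht.2.le (by linarith)
  | succ k ih =>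
    have h := isBigO_rpow_zero_log_smul (half_lt_self hb) (ih (half_pos hb))
    rwa [auxF_succ] at h

theorem test : True := trivial

lemma auxF_conv {k : ℕ} {s : ℂ} (hs : 0 < s.re) : MellinConvergent (auxF k) s :=
  mellinConvergent_of_isBigO_rpow (auxF_locInt k) (auxF_top k (s.re+1)) (lt_add_one _)
    (auxF_bot k (half_pos hs)) (half_lt_self hs)

lemma auxF_mellin (k : ℕ) : ∀ s : ℂ, 0 < s.re →
    mellin (auxF k) s = (-1)^k * (Nat.factorial k : ℂ) / s ^ (k+1) := by
  induction k with
  | zero =>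
    intro s hs
    have h := (hasMellin_one_Ioc hs).2
    have h0 : auxF 0 = Set.indicator (Ioc (0:ℝ) 1) (fun _ => (1:ℂ)) := by
      funext t; simp [auxF]
    rw [h0, h]
    simp
  | succ k ih =>
    intro s hs
    have hs0 : s ≠ 0 := fun h => by simp [h] at hs
    have hd : HasDerivAt (mellin (auxF k)) (mellin (auxF (k+1)) s) s := by
      have h := (mellin_hasDerivAt_of_isBigO_rpow (auxF_locInt k) (auxF_top k (s.re+1))
        (lt_add_one _) (auxF_bot k (half_pos hs)) (half_lt_self hs)).2
      rwa [auxF_succ] at h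
    have heq : mellin (auxF k) =ᶠ[nhds s]
        fun z : ℂ => (-1)^k * (Nat.factorial k : ℂ) / z ^ (k+1) := by
      filter_upwards [(isOpen_lt continuous_const Complex.continuous_re).mem_nhds hs] with z hz
      exact ih z hz
    have hd2 : HasDerivAt (fun z : ℂ => (-1)^k * (Nat.factorial k : ℂ) / z ^ (k+1))
        (mellin (auxF (k+1)) s) s := hd.congr_of_eventuallyEq heq.symm
    have hd3 : HasDerivAt (fun z : ℂ => (-1)^k * (Nat.factorial k : ℂ) / z ^ (k+1))
        ((-1)^(k+1) * (Nat.factorial (k+1) : ℂ) / s ^ (k+1+1)) s := by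
      have h := (hasDerivAt_zpow (-(k+1) : ℤ) s (Or.inl hs0)).const_mul
        ((-1:ℂ)^k * (Nat.factorial k : ℂ))
      have e1 : (fun z : ℂ => (-1:ℂ)^k * (Nat.factorial k : ℂ) * z ^ (-(k+1:ℕ) : ℤ))
          = fun z : ℂ => (-1)^k * (Nat.factorial k : ℂ) / z ^ (k+1) := by
        funext z
        rw [zpow_neg, zpow_natCast, div_eq_mul_inv]
      rw [show (-(k+1:ℕ) : ℤ) = (-(k+1) : ℤ) by push_cast; ring] at e1
      rw [e1] at h
      refine h.congr_deriv ?_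
      rw [show ((-(k+1) : ℤ) - 1) = -((k+2 : ℕ) : ℤ) by push_cast; ring, zpow_neg, zpow_natCast]
      rw [Nat.factorial_succ]
      push_cast
      field_simp
      ring
    exact hd2.unique hd3


/-- For a cut-off function `ω` on `[0,∞)`, the Mellin transform
`F(z) = ∫_0^∞ t^(z−p−1) (ln t)^k ω(t) dt` (defined for `Re z > Re p`) equals
`(−1)^k k! / (z−p)^(k+1) + g(z)` for an entire function `g`; in particular it
extends meromorphically to `ℂ` with a single pole at `z = p` of order `k+1`. -/
theorem mellin_cutoff_log_power_meromorphic
    (p : ℂ) (k : ℕ) (ω : ℝ → ℝ)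
    (hω_smooth : ContDiffOn ℝ (⊤ : ℕ∞) ω (Ici (0 : ℝ)))
    (hω_nonneg : ∀ t, 0 ≤ t → 0 ≤ ω t) (hω_le_one : ∀ t, 0 ≤ t → ω t ≤ 1)
    (hω_one : ∃ ε > (0 : ℝ), ∀ t, 0 ≤ t → t < ε → ω t = 1)
    (hω_zero : ∃ T : ℝ, ∀ t, T ≤ t → ω t = 0) :
    ∃ g : ℂ → ℂ, Differentiable ℂ g ∧
      ∀ z : ℂ, p.re < z.re →
        (∫ t in Ioi (0 : ℝ), (t : ℂ) ^ (z - p - 1) * (Real.log t : ℂ) ^ k * (ω t : ℂ)) =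
          (-1) ^ k * (Nat.factorial k : ℂ) / (z - p) ^ (k + 1) + g z := by
  obtain ⟨ε, hε, hε1⟩ := hω_one
  obtain ⟨T, hT⟩ := hω_zero
  set hfun : ℝ → ℂ := fun t => (Real.log t : ℂ) ^ k * (ω t : ℂ) with hfun_def
  set d : ℝ → ℂ := hfun - auxF k with d_def
  have hωc : ContinuousOn (fun t : ℝ => ((ω t : ℂ))) (Ioi (0:ℝ)) :=
    Complex.continuous_ofReal.comp_continuousOn
      ((hω_smooth.continuousOn).mono Ioi_subset_Ici_self)
  have hlogc : ContinuousOn (fun t : ℝ => (Real.log t : ℂ) ^ k) (Ioi (0:ℝ)) :=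
    ContinuousOn.pow (Complex.continuous_ofReal.comp_continuousOn
      (Real.continuousOn_log.mono (fun x hx => ne_of_gt hx))) _
  have hfun_locInt : LocallyIntegrableOn hfun (Ioi (0:ℝ)) :=
    (hlogc.mul hωc).locallyIntegrableOn measurableSet_Ioi
  have hd_locInt : LocallyIntegrableOn d (Ioi (0:ℝ)) := hfun_locInt.sub (auxF_locInt k)
  have hd_top : ∀ a : ℝ, d =O[atTop] (fun t : ℝ => t ^ (-a)) := by
    intro a
    refine (isBigO_zero _ _).congr' ?_ EventuallyEq.rfl
    filter_upwards [eventually_ge_atTop (max T 2)] with t ht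
    have ht2 : (1:ℝ) < t := lt_of_lt_of_le one_lt_two ((le_max_right T 2).trans ht)
    have : ω t = 0 := hT t ((le_max_left T 2).trans ht)
    simp [d_def, hfun_def, auxF, this, Set.indicator_of_notMem, Set.mem_Ioc, not_le.mpr ht2]
  have hd_bot : ∀ b : ℝ, d =O[𝓝[>] (0:ℝ)] (fun t : ℝ => t ^ (-b)) := by
    intro b
    refine (isBigO_zero _ _).congr' ?_ EventuallyEq.rfl
    filter_upwards [Ioo_mem_nhdsGT_of_mem
      (by simp [lt_min hε one_pos] : (0:ℝ) ∈ Ico (0:ℝ) (min ε 1))] with t ht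
    have h1 : ω t = 1 := hε1 t ht.1.le (lt_of_lt_of_le ht.2 (min_le_left _ _))
    have h2 : t ∈ Ioc (0:ℝ) 1 := ⟨ht.1, le_of_lt (lt_of_lt_of_le ht.2 (min_le_right _ _))⟩
    simp [d_def, hfun_def, auxF, h1, Set.indicator_of_mem h2]
  refine ⟨fun z => mellin d (z - p), ?_, ?_⟩
  · intro z
    have h1 : DifferentiableAt ℂ (mellin d) (z - p) :=
      mellin_differentiableAt_of_isBigO_rpow hd_locInt (hd_top ((z-p).re + 1)) (lt_add_one _)
        (hd_bot ((z-p).re - 1)) (by linarith)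
    exact DifferentiableAt.comp (g := mellin d) (f := fun y : ℂ => y - p) z h1 ((differentiable_id.sub_const p) z)
  · intro z hz
    set s : ℂ := z - p with s_def
    have hs : 0 < s.re := by
      rw [s_def, Complex.sub_re]; linarith
    have hconv_d : MellinConvergent d s :=
      mellinConvergent_of_isBigO_rpow hd_locInt (hd_top (s.re + 1)) (lt_add_one _)
        (hd_bot (s.re - 1)) (by linarith)
    have hsum := hasMellin_add (f := auxF k) (auxF_conv (k := k) hs) hconv_d
    have hfe : (fun t => auxF k t + d t) = hfun := by
      funext t; simp [d_def]
    rw [hfe] at hsum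
    have hL : (∫ t in Ioi (0 : ℝ), (t : ℂ) ^ (z - p - 1) * (Real.log t : ℂ) ^ k * (ω t : ℂ))
        = mellin hfun s := by
      rw [mellin]; congr 1; funext t; rw [smul_eq_mul]; ring
    rw [hL, hsum.2, auxF_mellin k s hs]
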